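/- (Deterministic core of Theorem 2.) Let p be a probability distribution on {0,1}^n with Σ_x p(x)² ≤ α/2^n for some α ≥ 1, and let 0 < δ < 1. Write L = (10√α/δ) log(10√α/δ). For 1 ≤ j ≤ n let 0 < ε_j < 1, set ε_min = min_j ε_j, and suppose λ_min satisfies 0 < λ_min ≤ ε_min ≤ λ_min(1 + 1/L). For each j with ε_j ≠ ε_min suppose λ_j satisfies λ_min ≤ λ_j ≤ ε_j and ε_j − λ_j ≤ λ_min/L. Set c = ⌈(1/λ_min) log(10√α/δ)⌉ and F = 10(n^c + 1)/δ, and suppose p̂' : {0,1}^n → ℝ satisfies p̂'(0^n) = 2^{-n} and |p̂(s) − p̂'(s)| ≤ 1/(2^n F) for every s with 1 ≤ |s| ≤ c. Define q(x) = Σ_{s: |s| ≤ c} (1−λ_min)^{|s|} p̂'(s) (−1)^{s·x}, let r be a probability distribution on {0,1}^n with ||q − r||_1 = 2 Σ_{x: q(x)<0} |q(x)|, set δ_j = (ε_j − ε_min)/(1 − ε_min) for all j, δ_j' = (λ_j − λ_min)/(1 − λ_min) for j with ε_j ≠ ε_min and δ_j' = 0 otherwise, and define p̃_B(x) = Σ_{s∈{0,1}^n}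 [Π_{j=1}^n (1−ε_j)^{s_j}] p̂(s) (−1)^{s·x}. Then ||p̃_B − T^1_{δ_1'} ∘ ⋯ ∘ T^n_{δ_n'} r||_1 ≤ (1 + 1/(1 − λ_min)) δ. -/

import Mathlib

/-!
Let `P` be `p` under uniform noise of rate `λ_min`; it is again nonnegative. Since
`T^j_d ∘ (uniform noise λ_min)` is noise of rate `μ_j = 1 - (1 - d)(1 - λ_min)`, the choice of `δ'`
makes `T_{δ'} P` equal to `p` under rates `μ_j ∈ [λ_min, ε_j]` with `ε_j - μ_j ≤ λ_min / L`.
As each `T^j_d` is an `l1` contraction,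
`‖p̃_B - T r‖₁ ≤ ‖p̃_B - T P‖₁ + ‖P - q‖₁ + ‖q - r‖₁`.
* The Fourier coefficients of `p̃_B` and `T P` differ by at most `|p̂(s)| / L`, so Cauchy–Schwarz
  and Parseval with `Σ p² ≤ α / 2ⁿ` bound the first term by `√α / L ≤ δ / 10`.
* In `P - q` the coefficients of weight `≤ c` contribute at most `n^c / F ≤ δ / 10` (there are at
  most `n^c` of them, and the weight-zero ones agree), the others at most
  `(1 - λ_min)^c √α ≤ δ / 10`.
* As `P ≥ 0`, the negative mass of `q` is at most `‖P - q‖₁`, so `‖q - r‖₁ ≤ 2δ / 5`.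
Altogether the distance is at most `7δ / 10`.
-/

/-- Dot product of two bit strings, `s·x = Σ_j s_j x_j`. -/
def dot {n : ℕ} (s x : Fin n → Bool) : ℕ :=
  (Finset.univ.filter fun j => s j && x j).card

/-- Hamming weight `|s| = Σ_j s_j`. -/
def wt {n : ℕ} (s : Fin n → Bool) : ℕ :=
  (Finset.univ.filter fun j => s j).card

/-- Fourier coefficient `f̂(s) = 2^{-n} Σ_x f(x) (-1)^{s·x}`. -/
noncomputable def fhat {n : ℕ} (f : (Fin n → Bool) → ℝ) (s : Fin n → Bool) : ℝ :=
  (1 / 2 ^ n) * ∑ x, f x * (-1 : ℝ) ^ dot s x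

/-- The single-qubit noise operator `T^j_δ`:
`(T^j_δ f)(x) = (1 - δ/2) f(x) + (δ/2) f(x ⊕ e_j)`. -/
noncomputable def noiseT {n : ℕ} (j : Fin n) (δ : ℝ) (f : (Fin n → Bool) → ℝ) :
    (Fin n → Bool) → ℝ :=
  fun x => (1 - δ / 2) * f x + (δ / 2) * f (Function.update x j (!x j))

/-- The composed noise operator `T^1_{δ_1} ∘ ⋯ ∘ T^n_{δ_n}`. -/
noncomputable def noiseComp {n : ℕ} (δ : Fin n → ℝ) (f : (Fin n → Bool) → ℝ) :
    (Fin n → Bool) → ℝ :=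
  (List.finRange n).foldr (fun j g => noiseT j (δ j) g) f

/-- The `l1` norm `‖f‖₁ = Σ_x |f(x)|`. -/
noncomputable def l1 {n : ℕ} (f : (Fin n → Bool) → ℝ) : ℝ :=
  ∑ x, |f x|

open Finset

section Walsh

variable {n : ℕ}

lemma dot_comm (s x : Fin n → Bool) : dot s x = dot x s := by
  simp only [dot, Bool.and_comm]

lemma neg_one_pow_dot (s x : Fin n → Bool) :
    (-1 : ℝ) ^ dot s x = ∏ j, (-1 : ℝ) ^ (s j && x j).toNat := by
  rw [prod_pow_eq_pow_sum, dot, card_filter]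
  congr 1
  exact sum_congr rfl fun j _ => by cases s j && x j <;> rfl

lemma sum_neg_one_pow_dot_mul (s t : Fin n → Bool) :
    ∑ x, (-1 : ℝ) ^ dot s x * (-1 : ℝ) ^ dot t x = if s = t then 2 ^ n else 0 := by
  simp only [neg_one_pow_dot, ← prod_mul_distrib]
  rw [← Fintype.prod_sum fun j b => (-1 : ℝ) ^ (s j && b).toNat * (-1 : ℝ) ^ (t j && b).toNat]
  have hfactor (j : Fin n) :
      ∑ b, (-1 : ℝ) ^ (s j && b).toNat * (-1 : ℝ) ^ (t j && b).toNat
        = if s j = t j then 2 else 0 := by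
    cases s j <;> cases t j <;> norm_num
  simp only [hfactor]
  split_ifs with h
  · simp [h]
  · obtain ⟨j, hj⟩ := Function.ne_iff.mp h
    exact prod_eq_zero (mem_univ j) (if_neg hj)

lemma neg_one_pow_dot_update_not (s x : Fin n → Bool) (j : Fin n) :
    (-1 : ℝ) ^ dot s (Function.update x j (!x j))
      = (-1 : ℝ) ^ (s j).toNat * (-1 : ℝ) ^ dot s x := by
  rw [neg_one_pow_dot, neg_one_pow_dot, ← mul_prod_erase _ _ (mem_univ j),
    ← mul_prod_erase _ _ (mem_univ j), ← mul_assoc]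
  congr 1
  · rw [Function.update_self]
    cases s j <;> cases x j <;> norm_num
  · exact prod_congr rfl fun k hk => by rw [Function.update_of_ne (ne_of_mem_erase hk)]

noncomputable def walshSum (g : (Fin n → Bool) → ℝ) : (Fin n → Bool) → ℝ :=
  fun x => ∑ s, g s * (-1 : ℝ) ^ dot s x

lemma walshSum_add (g h : (Fin n → Bool) → ℝ) : walshSum (g + h) = walshSum g + walshSum h := by
  funext x
  simp only [walshSum, Pi.add_apply, add_mul, sum_add_distrib]

lemma walshSum_sub (g h : (Fin n → Bool) → ℝ) : walshSum (g - h) = walshSum g - walshSum h := by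
  funext x
  simp only [walshSum, Pi.sub_apply, sub_mul, sum_sub_distrib]

lemma walshSum_fhat (f : (Fin n → Bool) → ℝ) : walshSum (fhat f) = f := by
  funext x
  have horth (y : Fin n → Bool) :
      ∑ s, (-1 : ℝ) ^ dot s y * (-1 : ℝ) ^ dot s x = if y = x then 2 ^ n else 0 := by
    simp only [dot_comm _ y, dot_comm _ x, sum_neg_one_pow_dot_mul]
  simp only [walshSum, fhat, mul_sum, sum_mul]
  rw [sum_comm]
  simp only [mul_assoc, ← mul_sum, horth]
  simp [field]

lemma sum_walshSum_mul_walshSum (g h : (Fin n → Bool) → ℝ) :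
    ∑ x, walshSum g x * walshSum h x = 2 ^ n * ∑ s, g s * h s := by
  simp only [walshSum, sum_mul_sum, mul_mul_mul_comm (g _)]
  rw [sum_comm]
  refine (sum_congr rfl fun s _ => ?_).trans (mul_sum _ _ _).symm
  rw [sum_comm]
  simp only [← mul_sum, sum_neg_one_pow_dot_mul]
  simp [mul_comm]

lemma sum_fhat_sq (f : (Fin n → Bool) → ℝ) : ∑ s, fhat f s ^ 2 = (∑ x, f x ^ 2) / 2 ^ n := by
  have h := sum_walshSum_mul_walshSum (fhat f) (fhat f)
  simp only [walshSum_fhat, ← sq] at h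
  rw [h]
  field_simp

end Walsh

section L1

variable {n : ℕ}

lemma l1_nonneg (f : (Fin n → Bool) → ℝ) : 0 ≤ l1 f :=
  sum_nonneg fun _ _ => abs_nonneg _

lemma l1_add_le (f g : (Fin n → Bool) → ℝ) : l1 (f + g) ≤ l1 f + l1 g := by
  rw [l1, l1, l1, ← sum_add_distrib]
  exact sum_le_sum fun x _ => abs_add_le _ _

lemma l1_sub_le (f g h : (Fin n → Bool) → ℝ) : l1 (f - h) ≤ l1 (f - g) + l1 (g - h) := by
  simpa using l1_add_le (f - g) (g - h)

lemma l1_walshSum_le (g : (Fin n → Bool) → ℝ) : l1 (walshSum g) ≤ 2 ^ n * ∑ s, |g s| := by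
  calc l1 (walshSum g) ≤ ∑ _x : Fin n → Bool, ∑ s, |g s| := by
        refine sum_le_sum fun x _ => (abs_sum_le_sum_abs _ _).trans_eq ?_
        simp [abs_mul]
    _ = 2 ^ n * ∑ s, |g s| := by simp

lemma l1_walshSum_le_sqrt (g : (Fin n → Bool) → ℝ) :
    l1 (walshSum g) ≤ 2 ^ n * √(∑ s, g s ^ 2) := by
  have hcs : l1 (walshSum g) ^ 2 ≤ 2 ^ n * ∑ x, walshSum g x ^ 2 := by
    simpa [l1] using sq_sum_le_card_mul_sum_sq (s := univ) (f := fun x => |walshSum g x|)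
  have hplancherel : ∑ x, walshSum g x ^ 2 = 2 ^ n * ∑ s, g s ^ 2 := by
    simpa only [← sq] using sum_walshSum_mul_walshSum g g
  rw [hplancherel, ← mul_assoc, ← pow_two] at hcs
  rw [← Real.sqrt_sq (l1_nonneg _), ← Real.sqrt_sq (by positivity : (0 : ℝ) ≤ 2 ^ n),
    ← Real.sqrt_mul (sq_nonneg _)]
  exact Real.sqrt_le_sqrt hcs

lemma l1_walshSum_le_of_abs_le (f g : (Fin n → Bool) → ℝ) {α t : ℝ} (ht : 0 ≤ t)
    (hf : ∑ x, f x ^ 2 ≤ α / 2 ^ n) (hg : ∀ s, |g s| ≤ t * |fhat f s|) :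
    l1 (walshSum g) ≤ t * √α := by
  have hsq : ∑ s, g s ^ 2 ≤ t ^ 2 * (α / 2 ^ n / 2 ^ n) := by
    calc ∑ s, g s ^ 2 ≤ ∑ s, t ^ 2 * fhat f s ^ 2 := by
          refine sum_le_sum fun s _ => ?_
          simpa [mul_pow] using pow_le_pow_left₀ (abs_nonneg _) (hg s) 2
      _ ≤ t ^ 2 * (α / 2 ^ n / 2 ^ n) := by
          rw [← mul_sum, sum_fhat_sq]
          gcongr
  calc l1 (walshSum g) ≤ 2 ^ n * √(t ^ 2 * (α / 2 ^ n / 2 ^ n)) :=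
        (l1_walshSum_le_sqrt g).trans (by gcongr)
    _ = t * √α := by
        rw [Real.sqrt_mul (sq_nonneg t), Real.sqrt_sq ht, div_div, ← pow_two,
          Real.sqrt_div' _ (sq_nonneg _), Real.sqrt_sq (by positivity)]
        field_simp

lemma sum_abs_filter_neg_le_l1_sub {P : (Fin n → Bool) → ℝ} (hP : ∀ x, 0 ≤ P x)
    (q : (Fin n → Bool) → ℝ) : ∑ x ∈ univ.filter (fun x => q x < 0), |q x| ≤ l1 (P - q) := by
  calc ∑ x ∈ univ.filter (fun x => q x < 0), |q x|
      ≤ ∑ x ∈ univ.filter (fun x => q x < 0), |P x - q x| :=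
        sum_le_sum fun x hx => by
          have hqx := (mem_filter.mp hx).2
          rw [abs_of_neg hqx, abs_of_nonneg (by linarith [hP x])]
          linarith [hP x]
    _ ≤ l1 (P - q) :=
        sum_le_sum_of_subset_of_nonneg (filter_subset _ _) fun _ _ _ => abs_nonneg _

end L1

section Noise

variable {n : ℕ}

lemma update_not_involutive (j : Fin n) :
    Function.Involutive fun x : Fin n → Bool => Function.update x j (!x j) := fun x => by
  simp

lemma noiseT_walshSum (j : Fin n) (d : ℝ) (g : (Fin n → Bool) → ℝ) :
    noiseT j d (walshSum g) = walshSum fun s => (1 - d) ^ (s j).toNat * g s := by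
  funext x
  simp only [noiseT, walshSum, mul_sum, ← sum_add_distrib, neg_one_pow_dot_update_not]
  exact sum_congr rfl fun s _ => by cases s j <;> simp <;> ring

lemma noiseT_sub (j : Fin n) (d : ℝ) (f g : (Fin n → Bool) → ℝ) :
    noiseT j d (f - g) = noiseT j d f - noiseT j d g := by
  funext x
  simp only [noiseT, Pi.sub_apply]
  ring

lemma noiseT_nonneg (j : Fin n) {d : ℝ} (hd0 : 0 ≤ d) (hd2 : d ≤ 2) {f : (Fin n → Bool) → ℝ}
    (hf : ∀ x, 0 ≤ f x) (x : Fin n → Bool) : 0 ≤ noiseT j d f x := by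
  exact add_nonneg (mul_nonneg (by linarith) (hf x)) (mul_nonneg (by linarith) (hf _))

lemma l1_noiseT_le (j : Fin n) {d : ℝ} (hd0 : 0 ≤ d) (hd2 : d ≤ 2) (f : (Fin n → Bool) → ℝ) :
    l1 (noiseT j d f) ≤ l1 f := by
  have hflip : ∑ x, |f (Function.update x j (!x j))| = ∑ x, |f x| :=
    Equiv.sum_comp (update_not_involutive j).toPerm fun x => |f x|
  calc l1 (noiseT j d f)
      ≤ ∑ x, ((1 - d / 2) * |f x| + d / 2 * |f (Function.update x j (!x j))|) := by
        refine sum_le_sum fun x _ => (abs_add_le _ _).trans_eq ?_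
        rw [abs_mul, abs_mul, abs_of_nonneg (by linarith : 0 ≤ 1 - d / 2),
          abs_of_nonneg (by linarith : 0 ≤ d / 2)]
    _ = l1 f := by
        rw [sum_add_distrib, ← mul_sum, ← mul_sum, hflip, l1]
        ring

lemma noiseComp_walshSum (δ : Fin n → ℝ) (g : (Fin n → Bool) → ℝ) :
    noiseComp δ (walshSum g) = walshSum fun s => (∏ j, (1 - δ j) ^ (s j).toNat) * g s := by
  suffices ∀ l : List (Fin n), l.foldr (fun j g => noiseT j (δ j) g) (walshSum g)
      = walshSum fun s => (l.map fun j => (1 - δ j) ^ (s j).toNat).prod * g s by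
    simp only [noiseComp, this, Fin.prod_univ_def]
  intro l
  induction l with
  | nil => simp
  | cons j l ih =>
    simp only [List.foldr_cons, ih, noiseT_walshSum, List.map_cons, List.prod_cons, mul_assoc]

lemma noiseComp_eq_walshSum (δ : Fin n → ℝ) (f : (Fin n → Bool) → ℝ) :
    noiseComp δ f = walshSum fun s => (∏ j, (1 - δ j) ^ (s j).toNat) * fhat f s := by
  conv_lhs => rw [← walshSum_fhat f]
  exact noiseComp_walshSum δ (fhat f)

lemma noiseComp_noiseComp (δ μ : Fin n → ℝ) (f : (Fin n → Bool) → ℝ) :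
    noiseComp δ (noiseComp μ f) = noiseComp (fun j => 1 - (1 - δ j) * (1 - μ j)) f := by
  rw [noiseComp_eq_walshSum μ, noiseComp_walshSum, noiseComp_eq_walshSum]
  simp only [sub_sub_cancel, mul_pow, prod_mul_distrib, mul_assoc]

lemma noiseComp_sub (δ : Fin n → ℝ) (f g : (Fin n → Bool) → ℝ) :
    noiseComp δ (f - g) = noiseComp δ f - noiseComp δ g := by
  simp only [noiseComp]
  induction List.finRange n with
  | nil => rfl
  | cons j l ih => simp only [List.foldr_cons, ih, noiseT_sub]

lemma noiseComp_nonneg {δ : Fin n → ℝ} (hδ : ∀ j, 0 ≤ δ j ∧ δ j ≤ 2)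
    {f : (Fin n → Bool) → ℝ} (hf : ∀ x, 0 ≤ f x) (x : Fin n → Bool) : 0 ≤ noiseComp δ f x := by
  simp only [noiseComp]
  induction List.finRange n generalizing x with
  | nil => exact hf x
  | cons j l ih => exact noiseT_nonneg j (hδ j).1 (hδ j).2 ih x

lemma l1_noiseComp_le {δ : Fin n → ℝ} (hδ : ∀ j, 0 ≤ δ j ∧ δ j ≤ 2) (f : (Fin n → Bool) → ℝ) :
    l1 (noiseComp δ f) ≤ l1 f := by
  simp only [noiseComp]
  induction List.finRange n with
  | nil => exact le_rfl
  | cons j l ih => exact (l1_noiseT_le j (hδ j).1 (hδ j).2 _).trans ih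

end Noise

section Weight

variable {n : ℕ}

lemma pow_wt (a : ℝ) (s : Fin n → Bool) : a ^ wt s = ∏ j, a ^ (s j).toNat := by
  rw [prod_pow_eq_pow_sum, wt, card_filter]
  exact congrArg _ (sum_congr rfl fun j _ => by cases s j <;> rfl)

lemma prod_pow_toNat (a : Fin n → ℝ) (s : Fin n → Bool) :
    ∏ j, a j ^ (s j).toNat = ∏ j ∈ univ.filter (s ·), a j := by
  rw [prod_filter]
  exact prod_congr rfl fun j _ => by cases s j <;> simp

lemma wt_eq_zero_iff (s : Fin n → Bool) : wt s = 0 ↔ s = fun _ => false := by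
  simp [wt, funext_iff]

lemma fhat_zero (f : (Fin n → Bool) → ℝ) : fhat f (fun _ => false) = (∑ x, f x) / 2 ^ n := by
  simp [fhat, dot, div_eq_inv_mul]

/-- A set of between `1` and `c` coordinates is the range of a map `Fin c → Fin n`. -/
lemma card_filter_wt_le_pow (c : ℕ) :
    #(univ.filter fun s : Fin n → Bool => 1 ≤ wt s ∧ wt s ≤ c) ≤ n ^ c := by
  classical
  calc #(univ.filter fun s : Fin n → Bool => 1 ≤ wt s ∧ wt s ≤ c)
      ≤ #(univ : Finset (Fin c → Fin n)) := by
        refine card_le_card_of_surjOn (fun f j => decide (j ∈ univ.image f)) ?_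
        intro s hs
        obtain ⟨hs1, hsc⟩ := (mem_filter.mp hs).2
        set S := univ.filter (s ·)
        have : Nonempty S := by
          obtain ⟨j, hj⟩ := card_pos.mp hs1
          exact ⟨⟨j, hj⟩⟩
        let e : S → Fin c := Fin.castLE hsc ∘ S.equivFin
        have he : Function.Injective e := (Fin.castLE_injective hsc).comp S.equivFin.injective
        let g : Fin c → S := Function.invFun e
        have himage : univ.image (fun i => (g i : Fin n)) = S := by
          ext j
          refine ⟨fun h => ?_, fun hj => ?_⟩
          · obtain ⟨i, -, rfl⟩ := mem_image.mp h
            exact (g i).2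
          · obtain ⟨i, hi⟩ := Function.invFun_surjective he ⟨j, hj⟩
            exact mem_image.mpr ⟨i, mem_univ _, congrArg Subtype.val hi⟩
        refine ⟨fun i => (g i : Fin n), mem_coe.mpr (mem_univ _), ?_⟩
        funext j
        simp [himage, S]
    _ = n ^ c := by simp

end Weight

lemma prod_sub_prod_le {ι : Type*} (S : Finset ι) {a b : ι → ℝ} {M d : ℝ}
    (h : ∀ j ∈ S, 0 ≤ b j ∧ b j ≤ a j ∧ a j ≤ M ∧ a j - b j ≤ d) :
    ∏ j ∈ S, a j - ∏ j ∈ S, b j ≤ #S * d * M ^ (#S - 1) := by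
  induction S using Finset.cons_induction with
  | empty => simp
  | cons i S hi ih =>
    have hS : ∀ j ∈ S, 0 ≤ b j ∧ b j ≤ a j ∧ a j ≤ M ∧ a j - b j ≤ d :=
      fun j hj => h j (mem_cons_of_mem hj)
    obtain ⟨hbi, hba, haM, habd⟩ := h i (mem_cons_self i S)
    have hb : 0 ≤ ∏ j ∈ S, b j := prod_nonneg fun j hj => (hS j hj).1
    have hba' : ∏ j ∈ S, b j ≤ ∏ j ∈ S, a j :=
      prod_le_prod (fun j hj => (hS j hj).1) fun j hj => (hS j hj).2.1
    have haM' : ∏ j ∈ S, a j ≤ M ^ #S := by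
      rw [← prod_const]
      exact prod_le_prod (fun j hj => (hS j hj).1.trans (hS j hj).2.1) fun j hj => (hS j hj).2.2.1
    have hpow : M * (#S * d * M ^ (#S - 1)) = #S * d * M ^ #S := by
      rcases Nat.eq_zero_or_pos #S with h0 | hpos
      · simp [h0]
      · rw [← Nat.sub_add_cancel hpos, pow_succ]
        simp only [Nat.add_sub_cancel]
        ring
    rw [prod_cons, prod_cons, card_cons, Nat.add_sub_cancel, Nat.cast_succ]
    calc a i * ∏ j ∈ S, a j - b i * ∏ j ∈ S, b j
        = (a i - b i) * ∏ j ∈ S, a j + b i * (∏ j ∈ S, a j - ∏ j ∈ S, b j) := by ring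
      _ ≤ d * M ^ #S + M * (#S * d * M ^ (#S - 1)) :=
        add_le_add (mul_le_mul habd haM' (hb.trans hba') (by linarith))
          (mul_le_mul (hba.trans haM) (ih hS) (by linarith) (by linarith))
      _ = (#S + 1) * d * M ^ #S := by rw [hpow]; ring

lemma nat_mul_pow_pred_mul_le_one {x : ℝ} (hx0 : 0 ≤ x) (hx1 : x ≤ 1) (k : ℕ) :
    k * x ^ (k - 1) * (1 - x) ≤ 1 := by
  have hsum : k * x ^ (k - 1) ≤ ∑ i ∈ range k, x ^ i := by
    simpa using card_nsmul_le_sum (range k) (x ^ ·) (x ^ (k - 1)) fun i hi =>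
      pow_le_pow_of_le_one hx0 hx1 (Nat.le_sub_one_of_lt (mem_range.mp hi))
  calc k * x ^ (k - 1) * (1 - x) ≤ (∑ i ∈ range k, x ^ i) * (1 - x) := by
        gcongr
    _ = 1 - x ^ k := geom_sum_mul_of_le_one hx1 k
    _ ≤ 1 := by linarith [pow_nonneg hx0 k]

/-- Independently of `#S`: the `k` differences of size `lam * t` are damped by
`k (1 - lam)^(k-1) lam ≤ 1`. -/
lemma abs_prod_one_sub_sub_prod_one_sub_le {ι : Type*} (S : Finset ι) {ε μ : ι → ℝ}
    {lam t : ℝ} (hlam0 : 0 < lam) (hlam1 : lam ≤ 1) (ht : 0 ≤ t)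
    (h : ∀ j ∈ S, lam ≤ μ j ∧ μ j ≤ ε j ∧ ε j ≤ 1 ∧ ε j - μ j ≤ lam * t) :
    |∏ j ∈ S, (1 - ε j) - ∏ j ∈ S, (1 - μ j)| ≤ t := by
  have hle : ∏ j ∈ S, (1 - ε j) ≤ ∏ j ∈ S, (1 - μ j) :=
    prod_le_prod (fun j hj => by linarith [h j hj]) fun j hj => by linarith [h j hj]
  have hdiff := prod_sub_prod_le S (a := fun j => 1 - μ j) (b := fun j => 1 - ε j)
    (M := 1 - lam) (d := lam * t) fun j hj => by
      obtain ⟨h1, h2, h3, h4⟩ := h j hj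
      exact ⟨by linarith, by linarith, by linarith, by linarith⟩
  have hgeom := nat_mul_pow_pred_mul_le_one (x := 1 - lam) (by linarith) (by linarith) #S
  rw [abs_sub_comm, abs_of_nonneg (by linarith)]
  calc ∏ j ∈ S, (1 - μ j) - ∏ j ∈ S, (1 - ε j) ≤ #S * (lam * t) * (1 - lam) ^ (#S - 1) := hdiff
    _ = t * (#S * (1 - lam) ^ (#S - 1) * (1 - (1 - lam))) := by ring
    _ ≤ t * 1 := by gcongr
    _ = t := mul_one t

lemma one_sub_pow_le_one_div {lam K : ℝ} (hlam0 : 0 < lam) (hlam1 : lam ≤ 1) (hK : 1 ≤ K) {c : ℕ}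
    (hc : 1 / lam * Real.logb 2 K ≤ c) : (1 - lam) ^ c ≤ 1 / K := by
  have hlog : Real.log K ≤ Real.logb 2 K := by
    rw [Real.logb, le_div_iff₀ (Real.log_pos one_lt_two)]
    nlinarith [Real.log_nonneg hK, Real.log_two_lt_d9]
  have hcl : Real.log K ≤ c * lam := by
    rw [one_div, inv_mul_le_iff₀ hlam0] at hc
    linarith
  calc (1 - lam) ^ c ≤ Real.exp (-lam) ^ c :=
        pow_le_pow_left₀ (by linarith) (Real.one_sub_le_exp_neg lam) c
    _ = Real.exp (-(c * lam)) := by rw [← Real.exp_nat_mul]; ring_nf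
    _ ≤ Real.exp (-Real.log K) := Real.exp_le_exp.mpr (by linarith)
    _ = 1 / K := by rw [Real.exp_neg, Real.exp_log (by linarith), one_div]

section Parameters

variable {α δ : ℝ}

lemma ten_le_ten_mul_sqrt_div (hα : 1 ≤ α) (hδ0 : 0 < δ) (hδ1 : δ ≤ 1) : 10 ≤ 10 * √α / δ := by
  rw [le_div_iff₀ hδ0]
  nlinarith [Real.one_le_sqrt.mpr hα]

lemma mul_sqrt_le_div_ten (hα : 0 < α) (hδ0 : 0 < δ) {t : ℝ} (ht : t ≤ 1 / (10 * √α / δ)) :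
    t * √α ≤ δ / 10 := by
  have : 0 < √α := Real.sqrt_pos.mpr hα
  exact (mul_le_mul_of_nonneg_right ht this.le).trans_eq (by field_simp)

lemma two_pow_mul_div_le (n c : ℕ) (hδ0 : 0 < δ) :
    2 ^ n * (n ^ c * (1 / (2 ^ n * (10 * ((n : ℝ) ^ c + 1) / δ)))) ≤ δ / 10 := by
  field_simp
  nlinarith [pow_nonneg (Nat.cast_nonneg (α := ℝ) n) c]

end Parameters

lemma le_mul_logb_two {K : ℝ} (hK : 2 ≤ K) : K ≤ K * Real.logb 2 K := by
  have : 1 ≤ Real.logb 2 K :=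
    (Real.le_logb_iff_rpow_le one_lt_two (by linarith)).mpr (by simpa using hK)
  nlinarith

section Estimates

variable {n : ℕ}

lemma l1_noiseComp_sub_noiseComp_le (p : (Fin n → Bool) → ℝ) {α lam t : ℝ} {ε μ : Fin n → ℝ}
    (hp : ∑ x, p x ^ 2 ≤ α / 2 ^ n) (hlam0 : 0 < lam) (hlam1 : lam ≤ 1) (ht : 0 ≤ t)
    (h : ∀ j, lam ≤ μ j ∧ μ j ≤ ε j ∧ ε j ≤ 1 ∧ ε j - μ j ≤ lam * t) :
    l1 (noiseComp ε p - noiseComp μ p) ≤ t * √α := by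
  rw [noiseComp_eq_walshSum, noiseComp_eq_walshSum, ← walshSum_sub]
  refine l1_walshSum_le_of_abs_le p _ ht hp fun s => ?_
  simp only [Pi.sub_apply, ← sub_mul, abs_mul, prod_pow_toNat]
  gcongr
  exact abs_prod_one_sub_sub_prod_one_sub_le _ hlam0 hlam1 ht fun j _ => h j

lemma l1_noiseComp_sub_truncation_le (p phat' q : (Fin n → Bool) → ℝ) {α lam η : ℝ} (c : ℕ)
    (hp : ∑ x, p x ^ 2 ≤ α / 2 ^ n) (hlam0 : 0 ≤ lam) (hlam1 : lam ≤ 1) (hη : 0 ≤ η)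
    (h0 : phat' (fun _ => false) = fhat p (fun _ => false))
    (happrox : ∀ s, 1 ≤ wt s → wt s ≤ c → |fhat p s - phat' s| ≤ η)
    (hq : ∀ x, q x = ∑ s ∈ univ.filter (fun s : Fin n → Bool => wt s ≤ c),
      (1 - lam) ^ wt s * phat' s * (-1 : ℝ) ^ dot s x) :
    l1 (noiseComp (fun _ => lam) p - q) ≤ 2 ^ n * (n ^ c * η) + (1 - lam) ^ c * √α := by
  set low : (Fin n → Bool) → ℝ :=
    fun s => if wt s ≤ c then (1 - lam) ^ wt s * (fhat p s - phat' s) else 0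
  set high : (Fin n → Bool) → ℝ := fun s => if wt s ≤ c then 0 else (1 - lam) ^ wt s * fhat p s
  have hsplit : noiseComp (fun _ => lam) p - q = walshSum low + walshSum high := by
    rw [← walshSum_add, noiseComp_eq_walshSum]
    funext x
    simp only [hq, Pi.sub_apply, walshSum, sum_filter, ← sum_sub_distrib, ← pow_wt]
    exact sum_congr rfl fun s _ => by simp only [Pi.add_apply, low, high]; split_ifs <;> ring
  have hlow : l1 (walshSum low) ≤ 2 ^ n * (n ^ c * η) := by
    have hcoeff (s : Fin n → Bool) : |low s| ≤ if 1 ≤ wt s ∧ wt s ≤ c then η else 0 := by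
      simp only [low]
      split_ifs with hc hs hs
      · rw [abs_mul, abs_of_nonneg (by positivity)]
        exact (mul_le_mul (pow_le_one₀ (by linarith) (by linarith)) (happrox s hs.1 hs.2)
          (abs_nonneg _) zero_le_one).trans_eq (one_mul η)
      · have : s = fun _ => false := (wt_eq_zero_iff s).mp (by omega)
        simp [this, h0]
      · exact absurd hs.2 hc
      · simp
    calc l1 (walshSum low) ≤ 2 ^ n * ∑ s, |low s| := l1_walshSum_le low
      _ ≤ 2 ^ n * (#(univ.filter fun s : Fin n → Bool => 1 ≤ wt s ∧ wt s ≤ c) * η) := by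
        gcongr
        refine (sum_le_sum fun s _ => hcoeff s).trans_eq ?_
        rw [← sum_filter, sum_const, nsmul_eq_mul]
      _ ≤ 2 ^ n * (n ^ c * η) := by
        have := card_filter_wt_le_pow (n := n) c
        gcongr
        exact_mod_cast this
  have hhigh : l1 (walshSum high) ≤ (1 - lam) ^ c * √α := by
    refine l1_walshSum_le_of_abs_le p high (by positivity) hp fun s => ?_
    simp only [high]
    split_ifs with hs
    · simp only [abs_zero]; positivity
    · rw [abs_mul, abs_of_nonneg (by positivity)]
      exact mul_le_mul_of_nonneg_right
        (pow_le_pow_of_le_one (by linarith) (by linarith) (by omega)) (abs_nonneg _)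
  rw [hsplit]
  exact (l1_add_le _ _).trans (add_le_add hlow hhigh)

end Estimates

/-- `d` is the paper's `δ'_j`, and `1 - (1 - d) * (1 - lam)` is the single rate of `T_d` applied
after uniform noise of rate `lam`. -/
lemma residual_rate_bounds {e emin lam l d L : ℝ} (hlam1 : lam < 1) (he1 : e < 1)
    (hmin : lam ≤ emin) (hmin' : emin ≤ lam * (1 + 1 / L))
    (hl : e ≠ emin → lam ≤ l ∧ l ≤ e ∧ e - l ≤ lam / L)
    (hd : d = if e = emin then 0 else (l - lam) / (1 - lam)) :
    (0 ≤ d ∧ d ≤ 2) ∧ lam ≤ 1 - (1 - d) * (1 - lam) ∧ 1 - (1 - d) * (1 - lam) ≤ e ∧ e ≤ 1 ∧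
      e - (1 - (1 - d) * (1 - lam)) ≤ lam * (1 / L) := by
  split_ifs at hd with he
  · subst hd he
    refine ⟨⟨le_rfl, zero_le_two⟩, by linarith, by linarith, he1.le, ?_⟩
    linarith [mul_add lam 1 (1 / L)]
  · obtain ⟨hl1, hl2, hl3⟩ := hl he
    have hμ : 1 - (1 - d) * (1 - lam) = l := by
      rw [hd]
      field_simp [(by linarith : 1 - lam ≠ 0)]
      ring
    have hd0 : 0 ≤ d := hd ▸ div_nonneg (by linarith) (by linarith)
    have hd1 : d ≤ 1 := hd ▸ (div_le_one (by linarith)).mpr (by linarith)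
    rw [hμ]
    exact ⟨⟨hd0, by linarith⟩, hl1, hl2, he1.le, by rw [mul_one_div]; exact hl3⟩

theorem stmt14_general {n : ℕ} (p phat' q r : (Fin n → Bool) → ℝ) (α δ lammin εmin L : ℝ)
    (ε lam : Fin n → ℝ)
    (hp0 : ∀ x, 0 ≤ p x) (hp1 : ∑ x, p x = 1)
    (hα : 1 ≤ α) (hp2 : ∑ x, p x ^ 2 ≤ α / 2 ^ n)
    (hδ0 : 0 < δ) (hδ1 : δ < 1)
    (hL : L = (10 * Real.sqrt α / δ) * Real.logb 2 (10 * Real.sqrt α / δ))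
    (hε : ∀ j, 0 < ε j ∧ ε j < 1)
    (hεmin_mem : ∃ j, ε j = εmin)
    (hlammin0 : 0 < lammin) (hlammin1 : lammin ≤ εmin)
    (hlammin2 : εmin ≤ lammin * (1 + 1 / L))
    (hlam : ∀ j, ε j ≠ εmin →
      lammin ≤ lam j ∧ lam j ≤ ε j ∧ ε j - lam j ≤ lammin / L)
    (c : ℕ) (hc : c = ⌈(1 / lammin) * Real.logb 2 (10 * Real.sqrt α / δ)⌉₊)
    (F : ℝ) (hF : F = 10 * ((n : ℝ) ^ c + 1) / δ)
    (h0 : phat' (fun _ => false) = 1 / 2 ^ n)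
    (happrox : ∀ s, 1 ≤ wt s → wt s ≤ c → |fhat p s - phat' s| ≤ 1 / (2 ^ n * F))
    (hq : ∀ x, q x = ∑ s ∈ Finset.univ.filter (fun s : Fin n → Bool => wt s ≤ c),
        (1 - lammin) ^ wt s * phat' s * (-1 : ℝ) ^ dot s x)
    (hqr : l1 (fun x => q x - r x)
      = 2 * ∑ x ∈ Finset.univ.filter (fun x : Fin n → Bool => q x < 0), |q x|)
    (δ₂ : Fin n → ℝ)
    (hδ₂ : ∀ j, δ₂ j
      = if ε j = εmin then 0 else (lam j - lammin) / (1 - lammin))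
    (ptB : (Fin n → Bool) → ℝ)
    (hB : ∀ x, ptB x
      = ∑ s, (∏ j, (1 - ε j) ^ (s j).toNat) * fhat p s * (-1 : ℝ) ^ dot s x) :
    l1 (fun x => ptB x - noiseComp δ₂ r x) ≤ (1 + 1 / (1 - lammin)) * δ := by
  obtain ⟨j₀, hj₀⟩ := hεmin_mem
  have hlam1 : lammin < 1 := hlammin1.trans_lt (hj₀ ▸ (hε j₀).2)
  have hK := ten_le_ten_mul_sqrt_div hα hδ0 hδ1.le
  have hKL : 10 * √α / δ ≤ L := hL ▸ le_mul_logb_two (by linarith)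
  have hrate (j : Fin n) :=
    residual_rate_bounds hlam1 (hε j).2 hlammin1 hlammin2 (hlam j) (hδ₂ j)
  set P := noiseComp (fun _ => lammin) p
  have hP : ∀ x, 0 ≤ P x := noiseComp_nonneg (fun _ => ⟨hlammin0.le, by linarith⟩) hp0
  have hptB : ptB = noiseComp ε p := funext fun x => by rw [hB, noiseComp_eq_walshSum]; rfl
  have h1 : l1 (ptB - noiseComp δ₂ P) ≤ δ / 10 := by
    rw [hptB, noiseComp_noiseComp]
    exact (l1_noiseComp_sub_noiseComp_le p hp2 hlammin0 hlam1.le (one_div_nonneg.mpr (by linarith))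
      fun j => (hrate j).2).trans
        (mul_sqrt_le_div_ten (by linarith) hδ0 (one_div_le_one_div_of_le (by linarith) hKL))
  have h2 : l1 (P - q) ≤ δ / 5 := by
    have hlow : 2 ^ n * (n ^ c * (1 / (2 ^ n * F))) ≤ δ / 10 := hF ▸ two_pow_mul_div_le n c hδ0
    have hhigh := mul_sqrt_le_div_ten (by linarith) hδ0
      (one_sub_pow_le_one_div hlammin0 hlam1.le (by linarith) (hc ▸ Nat.le_ceil _))
    have := l1_noiseComp_sub_truncation_le p phat' q c hp2 hlammin0.le hlam1.le
      (η := 1 / (2 ^ n * F)) (by rw [hF]; positivity) (by rw [h0, fhat_zero, hp1]) happrox hq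
    linarith
  have h3 : l1 (q - r) ≤ 2 * l1 (P - q) :=
    hqr.trans_le (by gcongr; exact sum_abs_filter_neg_le_l1_sub hP q)
  have hT (f : (Fin n → Bool) → ℝ) := l1_noiseComp_le (fun j => (hrate j).1) f
  calc l1 (ptB - noiseComp δ₂ r)
      ≤ l1 (ptB - noiseComp δ₂ P) + (l1 (noiseComp δ₂ (P - q)) + l1 (noiseComp δ₂ (q - r))) := by
        rw [noiseComp_sub, noiseComp_sub]
        exact (l1_sub_le _ _ _).trans (add_le_add le_rfl (l1_sub_le _ _ _))
    _ ≤ δ / 10 + (δ / 5 + 2 * (δ / 5)) := by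
        gcongr
        exacts [(hT _).trans h2, (hT _).trans (h3.trans (by linarith))]
    _ ≤ (1 + 1 / (1 - lammin)) * δ := by
        have : 0 < 1 / (1 - lammin) := one_div_pos.mpr (by linarith)
        nlinarith

theorem stmt14 {n : ℕ} (p phat' q r : (Fin n → Bool) → ℝ) (α δ lammin εmin L : ℝ)
    (ε lam : Fin n → ℝ)
    (hp0 : ∀ x, 0 ≤ p x) (hp1 : ∑ x, p x = 1)
    (hα : 1 ≤ α) (hp2 : ∑ x, p x ^ 2 ≤ α / 2 ^ n)
    (hδ0 : 0 < δ) (hδ1 : δ < 1)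
    (hL : L = (10 * Real.sqrt α / δ) * Real.logb 2 (10 * Real.sqrt α / δ))
    (hε : ∀ j, 0 < ε j ∧ ε j < 1)
    (hεmin_le : ∀ j, εmin ≤ ε j) (hεmin_mem : ∃ j, ε j = εmin)
    (hlammin0 : 0 < lammin) (hlammin1 : lammin ≤ εmin)
    (hlammin2 : εmin ≤ lammin * (1 + 1 / L))
    (hlam : ∀ j, ε j ≠ εmin →
      lammin ≤ lam j ∧ lam j ≤ ε j ∧ ε j - lam j ≤ lammin / L)
    (c : ℕ) (hc : c = ⌈(1 / lammin) * Real.logb 2 (10 * Real.sqrt α / δ)⌉₊)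
    (F : ℝ) (hF : F = 10 * ((n : ℝ) ^ c + 1) / δ)
    (h0 : phat' (fun _ => false) = 1 / 2 ^ n)
    (happrox : ∀ s, 1 ≤ wt s → wt s ≤ c → |fhat p s - phat' s| ≤ 1 / (2 ^ n * F))
    (hq : ∀ x, q x = ∑ s ∈ Finset.univ.filter (fun s : Fin n → Bool => wt s ≤ c),
        (1 - lammin) ^ wt s * phat' s * (-1 : ℝ) ^ dot s x)
    (hr0 : ∀ x, 0 ≤ r x) (hr1 : ∑ x, r x = 1)
    (hqr : l1 (fun x => q x - r x)
      = 2 * ∑ x ∈ Finset.univ.filter (fun x : Fin n → Bool => q x < 0), |q x|)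
    (δ₁ δ₂ : Fin n → ℝ)
    (hδ₁ : ∀ j, δ₁ j = (ε j - εmin) / (1 - εmin))
    (hδ₂ : ∀ j, δ₂ j
      = if ε j = εmin then 0 else (lam j - lammin) / (1 - lammin))
    (ptB : (Fin n → Bool) → ℝ)
    (hB : ∀ x, ptB x
      = ∑ s, (∏ j, (1 - ε j) ^ (s j).toNat) * fhat p s * (-1 : ℝ) ^ dot s x) :
    l1 (fun x => ptB x - noiseComp δ₂ r x) ≤ (1 + 1 / (1 - lammin)) * δ :=
  stmt14_general p phat' q r α δ lammin εmin L ε lam hp0 hp1 hα hp2 hδ0 hδ1 hL hε hεmin_mem hlammin0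
    hlammin1 hlammin2 hlam c hc F hF h0 happrox hq hqr δ₂ hδ₂ ptB hB
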